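/- Let $T$ be a $G$-invariant, densely defined symmetric operator with equal deficiency indices, and let $T_K$ be the von Neumann self-adjoint extension determined by a unitary $K : \mathcal{N}_+ \to \mathcal{N}_-$, with domain $\mathcal{D}(T_K) = \mathcal{D}(T) \oplus (\mathbb{I}+K)\mathcal{N}_+$ and $T_K(\Phi_0 + (\mathbb{I}+K)\xi_+) = T\Phi_0 + i(\mathbb{I}-K)\xi_+$. If $V(g)K\xi = KV(g)\xi$ for all $\xi \in \mathcal{N}_+$ and $g \in G$, then $T_K$ is $G$-invariant. -/
import Mathlib


open ComplexInnerProductSpace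

variable {H : Type*} [NormedAddCommGroup H] [InnerProductSpace ℂ H] [CompleteSpace H]

/-- The deficiency-type subspace `ker(T† - c·𝕀)` of a densely defined operator `T`. -/
noncomputable def deficiencySubspace (T : H →ₗ.[ℂ] H) (c : ℂ) : Submodule ℂ H where
  carrier := {x | ∃ h : x ∈ T.adjoint.domain, T.adjoint ⟨x, h⟩ = c • x}
  add_mem' := by
    rintro a b ⟨ha, hA⟩ ⟨hb, hB⟩
    refine ⟨T.adjoint.domain.add_mem ha hb, ?_⟩
    show T.adjoint (⟨a, ha⟩ + ⟨b, hb⟩) = c • (a + b)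
    rw [T.adjoint.map_add, hA, hB, smul_add]
  zero_mem' := by
    refine ⟨T.adjoint.domain.zero_mem, ?_⟩
    show T.adjoint 0 = c • (0 : H)
    rw [T.adjoint.map_zero, smul_zero]
  smul_mem' := by
    rintro t x ⟨hx, hX⟩
    refine ⟨T.adjoint.domain.smul_mem t hx, ?_⟩
    show T.adjoint (t • ⟨x, hx⟩) = c • t • x
    rw [T.adjoint.map_smul, hX, smul_comm]

lemma Vinv_cancel {G : Type*} [Group G] (V : G →* (H ≃ₗᵢ[ℂ] H)) (g : G) (x : H) :
    V g (V g⁻¹ x) = x := by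
  have := map_mul V g g⁻¹
  simp [← LinearIsometryEquiv.coe_mul] at *

lemma def_inv {G : Type*} [Group G] (V : G →* (H ≃ₗᵢ[ℂ] H))
    (T : H →ₗ.[ℂ] H) (hdense : Dense (T.domain : Set H))
    (hinvdom : ∀ (g : G), ∀ x ∈ T.domain, V g x ∈ T.domain)
    (hinv : ∀ (g : G) (x : T.domain) (h' : V g (x : H) ∈ T.domain),
      T ⟨V g (x : H), h'⟩ = V g (T x))
    (c : ℂ) (g : G) {x : H} (hx : x ∈ deficiencySubspace T c) :
    V g x ∈ deficiencySubspace T c := by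
  obtain ⟨hxd, hxe⟩ := hx
  have key : ∀ u : T.domain, ⟪(c • V g x : H), (u : H)⟫ = ⟪V g x, T u⟫ := by
    intro u
    have hu' : V g⁻¹ (u : H) ∈ T.domain := hinvdom g⁻¹ u u.2
    have h1 : T u = V g (T ⟨V g⁻¹ (u : H), hu'⟩) := by
      rw [hinv g⁻¹ u hu', Vinv_cancel]
    rw [h1]
    have h2 : ⟪V g x, V g (T ⟨V g⁻¹ (u : H), hu'⟩)⟫ = ⟪x, T ⟨V g⁻¹ (u : H), hu'⟩⟫ :=
      (V g).inner_map_map _ _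
    rw [h2, ← (T.adjoint_isFormalAdjoint hdense) ⟨x, hxd⟩ ⟨V g⁻¹ (u : H), hu'⟩, hxe]
    rw [inner_smul_left, inner_smul_left]
    congr 1
    have : ⟪V g x, V g (V g⁻¹ (u : H))⟫ = ⟪x, V g⁻¹ (u : H)⟫ := (V g).inner_map_map _ _
    rw [← this, Vinv_cancel]
  have hmem : V g x ∈ T.adjoint.domain :=
    LinearPMap.mem_adjoint_domain_of_exists _ ⟨c • V g x, key⟩
  exact ⟨hmem, LinearPMap.adjoint_apply_eq hdense ⟨V g x, hmem⟩ key⟩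

/-- Let `T` be a `G`-invariant densely defined symmetric operator with equal deficiency
indices and let `T_K` be the von Neumann self-adjoint extension determined by a unitary
`K : N₊ → N₋`, with domain `D(T) ⊕ (𝕀 + K)N₊` and `T_K(Φ₀ + (𝕀+K)ξ₊) = TΦ₀ + i(𝕀-K)ξ₊`.
If `V(g)K = KV(g)` on `N₊` then `T_K` is `G`-invariant. -/
theorem stmt_13 {G : Type*} [Group G] (V : G →* (H ≃ₗᵢ[ℂ] H))
    (T : H →ₗ.[ℂ] H) (hdense : Dense (T.domain : Set H))
    (hsymm : ∀ x y : T.domain, ⟪T x, (y : H)⟫ = ⟪(x : H), T y⟫)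
    (hinvdom : ∀ (g : G), ∀ x ∈ T.domain, V g x ∈ T.domain)
    (hinv : ∀ (g : G) (x : T.domain) (h' : V g (x : H) ∈ T.domain),
      T ⟨V g (x : H), h'⟩ = V g (T x))
    (K : ↥(deficiencySubspace T Complex.I) ≃ₗᵢ[ℂ] ↥(deficiencySubspace T (-Complex.I)))
    (TK : H →ₗ.[ℂ] H)
    (hdomTK : ∀ x : H, x ∈ TK.domain ↔
      ∃ (x0 : T.domain) (ξ : ↥(deficiencySubspace T Complex.I)),
        x = (x0 : H) + (ξ : H) + ((K ξ : ↥(deficiencySubspace T (-Complex.I))) : H))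
    (hactTK : ∀ (x0 : T.domain) (ξ : ↥(deficiencySubspace T Complex.I))
        (h : (x0 : H) + (ξ : H) + ((K ξ : ↥(deficiencySubspace T (-Complex.I))) : H)
          ∈ TK.domain),
      TK ⟨(x0 : H) + (ξ : H) + ((K ξ : ↥(deficiencySubspace T (-Complex.I))) : H), h⟩ =
        T x0 + Complex.I •
          ((ξ : H) - ((K ξ : ↥(deficiencySubspace T (-Complex.I))) : H)))
    (hcomm : ∀ (g : G) (ξ : ↥(deficiencySubspace T Complex.I))
        (h : V g (ξ : H) ∈ deficiencySubspace T Complex.I),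
      V g ((K ξ : ↥(deficiencySubspace T (-Complex.I))) : H) =
        ((K ⟨V g (ξ : H), h⟩ : ↥(deficiencySubspace T (-Complex.I))) : H)) :
    (∀ (g : G), ∀ x ∈ TK.domain, V g x ∈ TK.domain) ∧
    (∀ (g : G) (x : TK.domain) (h' : V g (x : H) ∈ TK.domain),
      TK ⟨V g (x : H), h'⟩ = V g (TK x)) := by
  constructor
  · intro g x hx
    rw [hdomTK] at hx ⊢
    obtain ⟨x0, ξ, rfl⟩ := hx
    have hξ' : V g (ξ : H) ∈ deficiencySubspace T Complex.I :=
      def_inv V T hdense hinvdom hinv Complex.I g ξ.2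
    refine ⟨⟨V g (x0 : H), hinvdom g _ x0.2⟩, ⟨V g (ξ : H), hξ'⟩, ?_⟩
    rw [map_add, map_add, hcomm g ξ hξ']
  · intro g x h'
    obtain ⟨x0, ξ, hx⟩ := (hdomTK x).mp x.2
    have hξ' : V g (ξ : H) ∈ deficiencySubspace T Complex.I :=
      def_inv V T hdense hinvdom hinv Complex.I g ξ.2
    have hKcomm := hcomm g ξ hξ'
    have hx0' : V g (x0 : H) ∈ T.domain := hinvdom g _ x0.2
    have hVgx : V g (x : H) =
        ((⟨V g (x0 : H), hx0'⟩ : T.domain) : H) +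
        ((⟨V g (ξ : H), hξ'⟩ : ↥(deficiencySubspace T Complex.I)) : H) +
        ((K ⟨V g (ξ : H), hξ'⟩ : ↥(deficiencySubspace T (-Complex.I))) : H) := by
      rw [hx, map_add, map_add, hKcomm]
    have hmem : ((⟨V g (x0 : H), hx0'⟩ : T.domain) : H) +
        ((⟨V g (ξ : H), hξ'⟩ : ↥(deficiencySubspace T Complex.I)) : H) +
        ((K ⟨V g (ξ : H), hξ'⟩ : ↥(deficiencySubspace T (-Complex.I))) : H) ∈ TK.domain :=
      hVgx ▸ h'
    have hxmem : (x0 : H) + (ξ : H) +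
        ((K ξ : ↥(deficiencySubspace T (-Complex.I))) : H) ∈ TK.domain := hx ▸ x.2
    have hxeq : x = ⟨(x0 : H) + (ξ : H) +
        ((K ξ : ↥(deficiencySubspace T (-Complex.I))) : H), hxmem⟩ := Subtype.ext hx
    have hveq : (⟨V g (x : H), h'⟩ : TK.domain) =
        ⟨((⟨V g (x0 : H), hx0'⟩ : T.domain) : H) +
        ((⟨V g (ξ : H), hξ'⟩ : ↥(deficiencySubspace T Complex.I)) : H) +
        ((K ⟨V g (ξ : H), hξ'⟩ : ↥(deficiencySubspace T (-Complex.I))) : H), hmem⟩ :=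
      Subtype.ext hVgx
    rw [hveq, hactTK, hxeq, hactTK, map_add, map_smul, map_sub,
      hinv g x0 hx0', hKcomm]
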